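/- Let A : Ω × ℝ^{n×N} → ℝ^{n×N} satisfy the coercivity condition c1|η|² − c2 ≤ A(x,η)·η, the growth condition |A(x,η)| ≤ c2(1+|η|), and be asymptotically Uhlenbeck and strongly asymptotically Uhlenbeck with continuous target matrix Ã. Then for every δ > 0 there exists a constant C = C(δ) such that for all x ∈ Ω and all η1, η2 ∈ ℝ^{n×N}: |A(x,η1) − A(x,η2) − Ã(x)(η1−η2)| ≤ δ|η1−η2| + C(δ). -/

import Mathlib

open MeasureTheory Metric Set Filter
open scoped RealInnerProductSpace Topology NNReal ENNReal

noncomputable section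

/-- Points of `ℝ^n`. -/
abbrev Eucl (n : ℕ) := EuclideanSpace ℝ (Fin n)

/-- `ℝ^{n×N}`-valued quantities (gradients of `ℝ^N`-valued maps on `ℝ^n`),
with the Euclidean (Frobenius) inner product. -/
abbrev Mat (n N : ℕ) := EuclideanSpace ℝ (Fin n × Fin N)

/-- The (uncentered-radius, centered) Hardy–Littlewood maximal function, with
values in `ℝ≥0∞`. -/
def maxFn {n : ℕ} {F : Type*} [NormedAddCommGroup F] (f : Eucl n → F) (x : Eucl n) : ℝ≥0∞ :=
  ⨆ r : {r : ℝ // 0 < r}, ⨍⁻ y in ball x r.1, (‖f y‖₊ : ℝ≥0∞) ∂volume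

/-- A weight: measurable, a.e. positive (and finite, being real-valued). -/
def IsWeight {n : ℕ} (ω : Eucl n → ℝ) : Prop :=
  Measurable ω ∧ ∀ᵐ x ∂(volume : Measure (Eucl n)), 0 < ω x

/-- The Muckenhoupt `A_p` condition (`1 < p`) with constant `Λ`:
`(⨍_B ω) (⨍_B ω^{-(p'-1)})^{1/(p'-1)} ≤ Λ` for all balls `B`, where `p' = p/(p-1)`,
so that `p' - 1 = 1/(p-1)` and `1/(p'-1) = p - 1`. -/
def IsApWeight {n : ℕ} (p Λ : ℝ) (ω : Eucl n → ℝ) : Prop :=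
  IsWeight ω ∧
  ∀ (x : Eucl n) (r : ℝ), 0 < r →
    (⨍ y in ball x r, ω y) * (⨍ y in ball x r, (ω y) ^ (-(1 / (p - 1)))) ^ (p - 1) ≤ Λ

/-- The Muckenhoupt `A_1` condition with constant `Λ` : `Mω ≤ Λ ω` a.e. -/
def IsA1Weight {n : ℕ} (Λ : ℝ) (ω : Eucl n → ℝ) : Prop :=
  IsWeight ω ∧ ∀ᵐ x ∂(volume : Measure (Eucl n)), maxFn ω x ≤ ENNReal.ofReal (Λ * ω x)

/-- Membership in the weighted Lebesgue space `L^p_ω(Ω)`. -/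
def MemWLp {n : ℕ} {F : Type*} [NormedAddCommGroup F] (Ω : Set (Eucl n)) (p : ℝ)
    (ω : Eucl n → ℝ) (f : Eucl n → F) : Prop :=
  AEStronglyMeasurable f (volume.restrict Ω) ∧
  ∫⁻ x in Ω, ENNReal.ofReal (‖f x‖ ^ p * ω x) < ⊤

/-- The weighted energy `∫_Ω ‖g‖^p ω dx`, as an extended nonnegative real. -/
def wInt {n : ℕ} {F : Type*} [NormedAddCommGroup F] (Ω : Set (Eucl n)) (p : ℝ)
    (ω : Eucl n → ℝ) (g : Eucl n → F) : ℝ≥0∞ :=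
  ∫⁻ x in Ω, ENNReal.ofReal (‖g x‖ ^ p * ω x)

/-- A bounded `C^1` domain: a nonempty bounded connected open set which is locally,
near every boundary point, the sublevel set of a `C^1` function with nonvanishing
gradient. -/
def IsBoundedC1Domain {n : ℕ} (Ω : Set (Eucl n)) : Prop :=
  IsOpen Ω ∧ Bornology.IsBounded Ω ∧ IsConnected Ω ∧
  ∀ x ∈ frontier Ω, ∃ r > 0, ∃ h : Eucl n → ℝ, ContDiff ℝ 1 h ∧
    (∀ y ∈ ball x r, fderiv ℝ h y ≠ 0) ∧
    Ω ∩ ball x r = {y ∈ ball x r | h y < 0}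

/-- Lipschitz boundary, encoded through the uniform interior cone condition. -/
def HasLipschitzBoundary {n : ℕ} (Ω : Set (Eucl n)) : Prop :=
  ∀ x ∈ frontier Ω, ∃ v : Eucl n, ‖v‖ = 1 ∧ ∃ θ ∈ Set.Ioo (0:ℝ) 1, ∃ δ > 0, ∃ ε > 0,
    ∀ y ∈ ball x ε ∩ closure Ω, ∀ z : Eucl n,
      z ≠ y → ‖z - y‖ < δ → θ * ‖z - y‖ ≤ ⟪v, z - y⟫ → z ∈ Ω

/-- The (pointwise a.e. defined) gradient matrix of a map `φ : ℝ^n → ℝ^N`. -/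
def lgrad {n N : ℕ} (φ : Eucl n → EuclideanSpace ℝ (Fin N)) (x : Eucl n) : Mat n N :=
  WithLp.toLp 2 (fun p : Fin n × Fin N => fderiv ℝ φ x (EuclideanSpace.single p.1 1) p.2)

/-- The (pointwise a.e. defined) gradient of a scalar function on `ℝ^n`. -/
def sgrad {n : ℕ} (c : Eucl n → ℝ) (x : Eucl n) : Eucl n :=
  WithLp.toLp 2 (fun i : Fin n => fderiv ℝ c x (EuclideanSpace.single i 1))

/-- `G` is the distributional gradient of `u` on all of `ℝ^n`. -/
def IsWeakGrad {n N : ℕ} (u : Eucl n → EuclideanSpace ℝ (Fin N))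
    (G : Eucl n → Mat n N) : Prop :=
  ∀ φ : Eucl n → ℝ, ContDiff ℝ (⊤ : ℕ∞) φ → HasCompactSupport φ →
    ∀ (i : Fin n) (j : Fin N),
      ∫ x, u x j * fderiv ℝ φ x (EuclideanSpace.single i 1) ∂volume
        = - ∫ x, G x (i, j) * φ x ∂volume

/-- `G` is the distributional gradient of `u` in the open set `s`. -/
def IsWeakGradOn {n N : ℕ} (s : Set (Eucl n)) (u : Eucl n → EuclideanSpace ℝ (Fin N))
    (G : Eucl n → Mat n N) : Prop :=
  ∀ φ : Eucl n → ℝ, ContDiff ℝ (⊤ : ℕ∞) φ → HasCompactSupport φ → tsupport φ ⊆ s →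
    ∀ (i : Fin n) (j : Fin N),
      ∫ x in s, u x j * fderiv ℝ φ x (EuclideanSpace.single i 1) ∂volume
        = - ∫ x in s, G x (i, j) * φ x ∂volume

/-- Membership `u ∈ W^{1,q}_0(Ω; ℝ^N)` with distributional gradient `G`, encoded via
zero extension: `u` and `G` vanish outside `Ω`, belong to `L^q(ℝ^n)`, and `G` is the
distributional gradient of `u` on the whole space (for a Lipschitz/C¹ domain this
characterizes the zero-trace Sobolev space). -/
def MemW10 {n N : ℕ} (Ω : Set (Eucl n)) (q : ℝ) (u : Eucl n → EuclideanSpace ℝ (Fin N))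
    (G : Eucl n → Mat n N) : Prop :=
  MemLp u (ENNReal.ofReal q) volume ∧ MemLp G (ENNReal.ofReal q) volume ∧
  IsWeakGrad u G ∧ ∀ x ∉ Ω, u x = 0 ∧ G x = 0

/-- Membership `u ∈ W^{1,q}(s; ℝ^N)` (no boundary condition) with gradient `G`. -/
def MemW1 {n N : ℕ} (s : Set (Eucl n)) (q : ℝ) (u : Eucl n → EuclideanSpace ℝ (Fin N))
    (G : Eucl n → Mat n N) : Prop :=
  MemLp u (ENNReal.ofReal q) (volume.restrict s) ∧
  MemLp G (ENNReal.ofReal q) (volume.restrict s) ∧ IsWeakGradOn s u G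

/-- Membership in `W^{1,∞}_0(Ω;ℝ^N)`: Lipschitz and vanishing outside `Ω`. -/
def MemW1inf0 {n N : ℕ} (Ω : Set (Eucl n)) (u : Eucl n → EuclideanSpace ℝ (Fin N)) : Prop :=
  (∃ K : ℝ≥0, LipschitzWith K u) ∧ ∀ x ∉ Ω, u x = 0

/-- Test functions `φ ∈ C^{0,1}_0(Ω; ℝ^N)`: Lipschitz with compact support inside `Ω`. -/
def TestLip {n N : ℕ} (Ω : Set (Eucl n)) (φ : Eucl n → EuclideanSpace ℝ (Fin N)) : Prop :=
  (∃ K : ℝ≥0, LipschitzWith K φ) ∧ HasCompactSupport φ ∧ tsupport φ ⊆ Ω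

/-- Carathéodory conditions for `A : Ω × ℝ^{n×N} → ℝ^{n×N}`. -/
def Caratheodory {n N : ℕ} (Ω : Set (Eucl n)) (A : Eucl n → Mat n N → Mat n N) : Prop :=
  (∀ η, Measurable fun x => A x η) ∧
  ∀ᵐ x ∂(volume : Measure (Eucl n)), x ∈ Ω → Continuous (A x)

/-- `2`-coercivity: `c1|η|² - c2 ≤ A(x,η)·η`. -/
def Coercive {n N : ℕ} (Ω : Set (Eucl n)) (c1 c2 : ℝ) (A : Eucl n → Mat n N → Mat n N) : Prop :=
  ∀ᵐ x ∂(volume : Measure (Eucl n)), x ∈ Ω →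
    ∀ η : Mat n N, c1 * ‖η‖ ^ 2 - c2 ≤ ⟪A x η, η⟫

/-- Linear (`(p-1)=1`) growth: `|A(x,η)| ≤ c2(1+|η|)`. -/
def LinearGrowth {n N : ℕ} (Ω : Set (Eucl n)) (c2 : ℝ) (A : Eucl n → Mat n N → Mat n N) : Prop :=
  ∀ᵐ x ∂(volume : Measure (Eucl n)), x ∈ Ω →
    ∀ η : Mat n N, ‖A x η‖ ≤ c2 * (1 + ‖η‖)

/-- Monotonicity: `(A(x,η1) - A(x,η2))·(η1-η2) ≥ 0`. -/
def MonotoneOp {n N : ℕ} (Ω : Set (Eucl n)) (A : Eucl n → Mat n N → Mat n N) : Prop :=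
  ∀ᵐ x ∂(volume : Measure (Eucl n)), x ∈ Ω →
    ∀ η1 η2 : Mat n N, 0 ≤ ⟪A x η1 - A x η2, η1 - η2⟫

/-- Strict monotonicity. -/
def StrictlyMonotoneOp {n N : ℕ} (Ω : Set (Eucl n)) (A : Eucl n → Mat n N → Mat n N) : Prop :=
  ∀ᵐ x ∂(volume : Measure (Eucl n)), x ∈ Ω →
    ∀ η1 η2 : Mat n N, η1 ≠ η2 → 0 < ⟪A x η1 - A x η2, η1 - η2⟫

/-- `A` is asymptotically Uhlenbeck with (continuous on `closure Ω`) target matrix `Ã`. -/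
def AsympUhlenbeck {n N : ℕ} (Ω : Set (Eucl n)) (A : Eucl n → Mat n N → Mat n N)
    (Atil : Eucl n → Mat n N →L[ℝ] Mat n N) : Prop :=
  ContinuousOn Atil (closure Ω) ∧
  ∀ ε > (0:ℝ), ∃ k > (0:ℝ), ∀ᵐ x ∂(volume : Measure (Eucl n)), x ∈ Ω →
    ∀ η : Mat n N, k ≤ ‖η‖ → ‖A x η - Atil x η‖ ≤ ε * ‖η‖

/-- `A` is strongly asymptotically Uhlenbeck with target matrix `Ã`:
`|∂A(x,η)/∂η - Ã(x)| ≤ ε` for `|η| ≥ k(ε)` (in particular `A(x,·)` is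
differentiable there). -/
def StrongAsympUhlenbeck {n N : ℕ} (Ω : Set (Eucl n)) (A : Eucl n → Mat n N → Mat n N)
    (Atil : Eucl n → Mat n N →L[ℝ] Mat n N) : Prop :=
  ContinuousOn Atil (closure Ω) ∧
  ∀ ε > (0:ℝ), ∃ k > (0:ℝ), ∀ᵐ x ∂(volume : Measure (Eucl n)), x ∈ Ω →
    ∀ η : Mat n N, k ≤ ‖η‖ →
      DifferentiableAt ℝ (A x) η ∧ ‖fderiv ℝ (A x) η - Atil x‖ ≤ ε

/-- The weak formulation `∫_Ω A(x,∇u)·∇φ dx = ∫_Ω f·∇φ dx` for all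
`φ ∈ C^{0,1}_0(Ω;ℝ^N)`, where `G = ∇u`. -/
def IsWeakSol {n N : ℕ} (Ω : Set (Eucl n)) (A : Eucl n → Mat n N → Mat n N)
    (f : Eucl n → Mat n N) (G : Eucl n → Mat n N) : Prop :=
  ∀ φ : Eucl n → EuclideanSpace ℝ (Fin N), TestLip Ω φ →
    ∫ x in Ω, ⟪A x (G x), lgrad φ x⟫ ∂volume = ∫ x in Ω, ⟪f x, lgrad φ x⟫ ∂volume

/-- Mean value inequality: if `g` is differentiable on the segment `[a,b]` with
`‖fderiv g − T‖ ≤ δ` there, then `‖g a − g b − T (a−b)‖ ≤ δ ‖a−b‖`. -/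
lemma mvt_piece {E : Type*} [NormedAddCommGroup E] [NormedSpace ℝ E]
    (g : E → E) (T : E →L[ℝ] E) (δ : ℝ) (a b : E)
    (hdiff : ∀ η ∈ segment ℝ a b, DifferentiableAt ℝ g η)
    (hbd : ∀ η ∈ segment ℝ a b, ‖fderiv ℝ g η - T‖ ≤ δ) :
    ‖g a - g b - T (a - b)‖ ≤ δ * ‖a - b‖ := by
  set f : E → E := fun η => g η - T η with hf
  have hfd : ∀ η ∈ segment ℝ a b, DifferentiableAt ℝ f η := fun η hη =>
    (hdiff η hη).sub T.differentiableAt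
  have hfb : ∀ η ∈ segment ℝ a b, ‖fderiv ℝ f η‖ ≤ δ := by
    intro η hη
    have : fderiv ℝ f η = fderiv ℝ g η - T := by
      rw [hf]
      rw [fderiv_fun_sub (hdiff η hη) T.differentiableAt, T.fderiv]
    rw [this]
    exact hbd η hη
  have key := (convex_segment a b).norm_image_sub_le_of_norm_fderiv_le hfd hfb
    (right_mem_segment ℝ a b) (left_mem_segment ℝ a b)
  have heq : f a - f b = g a - g b - T (a - b) := by
    simp only [hf, map_sub]; abel
  rw [← heq]
  exact key

/-- Parametrization of a subsegment of a line. -/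
lemma seg_param {E : Type*} [AddCommGroup E] [Module ℝ E] (η1 v : E) (s t : ℝ)
    (hst : s ≤ t) :
    ∀ η ∈ segment ℝ (η1 + s • v) (η1 + t • v),
      ∃ r, r ∈ Set.Icc s t ∧ η = η1 + r • v := by
  rintro η ⟨a, b, ha, hb, hab, rfl⟩
  have hb' : b = 1 - a := by linarith
  subst hb'
  refine ⟨a * s + (1 - a) * t,
    ⟨by nlinarith [mul_nonneg hb (sub_nonneg.mpr hst), mul_nonneg ha (sub_nonneg.mpr hst)],
     by nlinarith [mul_nonneg hb (sub_nonneg.mpr hst), mul_nonneg ha (sub_nonneg.mpr hst)]⟩, ?_⟩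
  module

set_option maxHeartbeats 2000000 in
/-- algebraic lemma, Lemma 5.1 of the paper.
If `A` is coercive, of linear growth, asymptotically Uhlenbeck and strongly
asymptotically Uhlenbeck with target `Ã`, then for every `δ > 0` there is a
constant `C` such that (for a.e. `x ∈ Ω`) for all `η₁, η₂`:
`|A(x,η₁) - A(x,η₂) - Ã(x)(η₁-η₂)| ≤ δ|η₁-η₂| + C`. -/
theorem stmt11 (n N : ℕ) (Ω : Set (Eucl n))
    (A : Eucl n → Mat n N → Mat n N) (c1 c2 : ℝ) (hc1 : 0 < c1) (hc2 : 0 < c2)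
    (hco : Coercive Ω c1 c2 A) (hgr : LinearGrowth Ω c2 A)
    (Atil : Eucl n → Mat n N →L[ℝ] Mat n N)
    (hA : AsympUhlenbeck Ω A Atil) (hSA : StrongAsympUhlenbeck Ω A Atil)
    (δ : ℝ) (hδ : 0 < δ) :
    ∃ C : ℝ, ∀ᵐ x ∂(volume : Measure (Eucl n)), x ∈ Ω →
      ∀ η1 η2 : Mat n N,
        ‖A x η1 - A x η2 - Atil x (η1 - η2)‖ ≤ δ * ‖η1 - η2‖ + C := by
  obtain ⟨-, hA2⟩ := hA
  obtain ⟨k0, hk0, hA1⟩ := hA2 1 one_pos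
  obtain ⟨-, hS2⟩ := hSA
  obtain ⟨k1, hk1, hS1⟩ := hS2 δ hδ
  set M : ℝ := (c2 * (1 + k0) + k0) / k0 with hM
  have hM0 : 0 ≤ M := by positivity
  refine ⟨2 * c2 * (1 + k1) + 2 * M * k1, ?_⟩
  have hC0 : 0 ≤ 2 * c2 * (1 + k1) + 2 * M * k1 := by positivity
  filter_upwards [hA1, hS1, hgr] with x hxA hxS hxg hx
  replace hxA := hxA hx
  replace hxS := hxS hx
  replace hxg := hxg hx
  intro η1 η2
  -- pointwise bound on Atil x
  have hAtil : ∀ η : Mat n N, ‖Atil x η‖ ≤ M * ‖η‖ := by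
    intro η
    by_cases hη : η = 0
    · simp [hη]
    have hηn : 0 < ‖η‖ := norm_pos_iff.mpr hη
    set η' : Mat n N := (k0 / ‖η‖) • η with hη'
    have hη'norm : ‖η'‖ = k0 := by
      rw [hη', norm_smul, Real.norm_eq_abs, abs_of_pos (div_pos hk0 hηn)]
      field_simp
    have h1 : ‖A x η' - Atil x η'‖ ≤ 1 * ‖η'‖ := hxA η' (by rw [hη'norm])
    have h2 : ‖A x η'‖ ≤ c2 * (1 + ‖η'‖) := hxg η'
    have h3 : ‖Atil x η'‖ ≤ c2 * (1 + k0) + k0 := by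
      have := norm_sub_norm_le (A x η') (Atil x η')
      have h4 : ‖Atil x η'‖ ≤ ‖A x η'‖ + ‖A x η' - Atil x η'‖ := by
        have := norm_sub_le (A x η' - Atil x η') (A x η')
        simp only [sub_sub_cancel_left, norm_neg] at this
        linarith
      rw [hη'norm] at h1 h2
      linarith
    have h5 : Atil x η = (‖η‖ / k0) • Atil x η' := by
      rw [← (Atil x).map_smul]
      congr 1
      rw [hη', smul_smul]
      rw [show ‖η‖ / k0 * (k0 / ‖η‖) = 1 by field_simp, one_smul]
    rw [h5, norm_smul, Real.norm_eq_abs, abs_of_pos (div_pos hηn hk0)]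
    have h6 := mul_le_mul_of_nonneg_left h3 (le_of_lt (div_pos hηn hk0))
    calc ‖η‖ / k0 * ‖Atil x η'‖ ≤ ‖η‖ / k0 * (c2 * (1 + k0) + k0) := h6
      _ = M * ‖η‖ := by rw [hM]; field_simp
  -- MVT on segments staying outside the ball of radius k1
  have hmvt : ∀ a b : Mat n N, (∀ η ∈ segment ℝ a b, k1 ≤ ‖η‖) →
      ‖A x a - A x b - Atil x (a - b)‖ ≤ δ * ‖a - b‖ := by
    intro a b hseg
    exact mvt_piece (A x) (Atil x) δ a b
      (fun η hη => (hxS η (hseg η hη)).1) (fun η hη => (hxS η (hseg η hη)).2)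
  set v : Mat n N := η2 - η1 with hv
  set γ : ℝ → Mat n N := fun t => η1 + t • v with hγ
  have hγ0 : γ 0 = η1 := by simp [hγ]
  have hγ1 : γ 1 = η2 := by simp [hγ, hv]
  have hγc : Continuous fun t : ℝ => ‖γ t‖ := by
    apply Continuous.norm
    exact continuous_const.add (continuous_id.smul continuous_const)
  set S : Set ℝ := {t : ℝ | t ∈ Set.Icc (0:ℝ) 1 ∧ ‖γ t‖ ≤ k1} with hS
  -- a subsegment of [η1,η2] avoiding S lies outside the ball
  have hseg_out : ∀ s t : ℝ, 0 ≤ s → s ≤ t → t ≤ 1 →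
      (∀ r ∈ Set.Icc s t, k1 ≤ ‖γ r‖) →
      ‖A x (γ s) - A x (γ t) - Atil x (γ s - γ t)‖ ≤ δ * ‖γ s - γ t‖ := by
    intro s t hs0 hst ht1 hout
    apply hmvt
    intro η hη
    have : η ∈ segment ℝ (η1 + s • v) (η1 + t • v) := hη
    obtain ⟨r, hr, rfl⟩ := seg_param η1 v s t hst η this
    exact hout r hr
  by_cases hSne : S.Nonempty
  · -- the segment meets the ball: split in three pieces
    have hScl : IsClosed S := by
      rw [hS]
      exact (isClosed_Icc.preimage continuous_id).inter (isClosed_le hγc continuous_const)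
    have hSbdd : BddBelow S ∧ BddAbove S := by
      constructor
      · exact ⟨0, fun t ht => ht.1.1⟩
      · exact ⟨1, fun t ht => ht.1.2⟩
    set t1 := sInf S with ht1def
    set t2 := sSup S with ht2def
    have ht1S : t1 ∈ S := hScl.csInf_mem hSne hSbdd.1
    have ht2S : t2 ∈ S := hScl.csSup_mem hSne hSbdd.2
    have ht12 : t1 ≤ t2 := by
      obtain ⟨t, ht⟩ := hSne
      exact le_trans (csInf_le hSbdd.1 ht) (le_csSup hSbdd.2 ht)
    have ht10 : 0 ≤ t1 := ht1S.1.1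
    have ht21 : t2 ≤ 1 := ht2S.1.2
    -- piece 1
    have piece1 : ‖A x η1 - A x (γ t1) - Atil x (η1 - γ t1)‖ ≤ δ * ‖η1 - γ t1‖ := by
      rcases eq_or_lt_of_le ht10 with h0 | h0
      · have ht1z : t1 = 0 := h0.symm
        rw [ht1z, hγ0]
        simp
      · have hout : ∀ r ∈ Set.Icc (0:ℝ) t1, k1 ≤ ‖γ r‖ := by
          have hlt : ∀ r, 0 ≤ r → r < t1 → k1 < ‖γ r‖ := by
            intro r hr0 hrt1
            by_contra hcon
            push_neg at hcon
            have hrS : r ∈ S := ⟨⟨hr0, le_trans (le_of_lt hrt1) (le_trans ht12 ht21)⟩, hcon⟩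
            exact absurd (csInf_le hSbdd.1 hrS) (not_le.mpr hrt1)
          intro r hr
          rcases lt_or_eq_of_le hr.2 with h | h
          · exact le_of_lt (hlt r hr.1 h)
          · rw [h]
            have htend : Filter.Tendsto (fun s => ‖γ s‖) (𝓝[<] t1) (𝓝 ‖γ t1‖) :=
              (hγc.tendsto t1).mono_left nhdsWithin_le_nhds
            apply ge_of_tendsto htend
            filter_upwards [Ioo_mem_nhdsLT_of_mem (show t1 ∈ Set.Ioc (0:ℝ) t1 from ⟨h0, le_refl t1⟩)]
              with s hs
            exact le_of_lt (hlt s (le_of_lt hs.1) hs.2)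
        rw [← hγ0]
        exact hseg_out 0 t1 le_rfl ht10 (le_trans ht12 ht21) hout
    -- piece 3
    have piece3 : ‖A x (γ t2) - A x η2 - Atil x (γ t2 - η2)‖ ≤ δ * ‖γ t2 - η2‖ := by
      rcases eq_or_lt_of_le ht21 with h0 | h0
      · rw [h0, hγ1]
        simp
      · have hout : ∀ r ∈ Set.Icc t2 (1:ℝ), k1 ≤ ‖γ r‖ := by
          have hlt : ∀ r, t2 < r → r ≤ 1 → k1 < ‖γ r‖ := by
            intro r hrt2 hr1
            by_contra hcon
            push_neg at hcon
            have hrS : r ∈ S := ⟨⟨le_trans (le_trans ht10 ht12) (le_of_lt hrt2), hr1⟩, hcon⟩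
            exact absurd (le_csSup hSbdd.2 hrS) (not_le.mpr hrt2)
          intro r hr
          rcases lt_or_eq_of_le hr.1 with h | h
          · exact le_of_lt (hlt r h hr.2)
          · rw [← h]
            have htend : Filter.Tendsto (fun s => ‖γ s‖) (𝓝[>] t2) (𝓝 ‖γ t2‖) :=
              (hγc.tendsto t2).mono_left nhdsWithin_le_nhds
            apply ge_of_tendsto htend
            filter_upwards [Ioo_mem_nhdsGT_of_mem (show t2 ∈ Set.Ico t2 (1:ℝ) from ⟨le_refl t2, h0⟩)]
              with s hs
            exact le_of_lt (hlt s hs.1 (le_of_lt hs.2))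
        rw [← hγ1]
        exact hseg_out t2 1 (le_trans ht10 ht12) ht21 le_rfl hout
    -- piece 2
    have piece2 : ‖A x (γ t1) - A x (γ t2) - Atil x (γ t1 - γ t2)‖
        ≤ 2 * c2 * (1 + k1) + 2 * M * k1 := by
      have hn1 : ‖γ t1‖ ≤ k1 := ht1S.2
      have hn2 : ‖γ t2‖ ≤ k1 := ht2S.2
      have hg1 : ‖A x (γ t1)‖ ≤ c2 * (1 + k1) := by
        calc ‖A x (γ t1)‖ ≤ c2 * (1 + ‖γ t1‖) := hxg _
          _ ≤ c2 * (1 + k1) := by nlinarith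
      have hg2 : ‖A x (γ t2)‖ ≤ c2 * (1 + k1) := by
        calc ‖A x (γ t2)‖ ≤ c2 * (1 + ‖γ t2‖) := hxg _
          _ ≤ c2 * (1 + k1) := by nlinarith
      have hAt : ‖Atil x (γ t1 - γ t2)‖ ≤ M * (2 * k1) := by
        calc ‖Atil x (γ t1 - γ t2)‖ ≤ M * ‖γ t1 - γ t2‖ := hAtil _
          _ ≤ M * (2 * k1) := by
            apply mul_le_mul_of_nonneg_left _ hM0
            calc ‖γ t1 - γ t2‖ ≤ ‖γ t1‖ + ‖γ t2‖ := norm_sub_le _ _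
              _ ≤ 2 * k1 := by linarith
      calc ‖A x (γ t1) - A x (γ t2) - Atil x (γ t1 - γ t2)‖
          ≤ ‖A x (γ t1) - A x (γ t2)‖ + ‖Atil x (γ t1 - γ t2)‖ := norm_sub_le _ _
        _ ≤ (‖A x (γ t1)‖ + ‖A x (γ t2)‖) + ‖Atil x (γ t1 - γ t2)‖ := by
            have := norm_sub_le (A x (γ t1)) (A x (γ t2))
            linarith
        _ ≤ 2 * c2 * (1 + k1) + 2 * M * k1 := by linarith
    -- combine
    have hsplit : A x η1 - A x η2 - Atil x (η1 - η2) =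
        (A x η1 - A x (γ t1) - Atil x (η1 - γ t1))
        + (A x (γ t1) - A x (γ t2) - Atil x (γ t1 - γ t2))
        + (A x (γ t2) - A x η2 - Atil x (γ t2 - η2)) := by
      simp only [map_sub]
      abel
    have hlen1 : ‖η1 - γ t1‖ = t1 * ‖v‖ := by
      have : η1 - γ t1 = -(t1 • v) := by simp only [hγ]; module
      rw [this, norm_neg, norm_smul, Real.norm_eq_abs, abs_of_nonneg ht10]
    have hlen3 : ‖γ t2 - η2‖ = (1 - t2) * ‖v‖ := by
      have : γ t2 - η2 = -((1 - t2) • v) := by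
        rw [← hγ1]
        simp only [hγ]
        module
      rw [this, norm_neg, norm_smul, Real.norm_eq_abs, abs_of_nonneg (by linarith)]
    have hlenv : ‖η1 - η2‖ = ‖v‖ := by rw [hv, norm_sub_rev]
    have h3 : ‖A x η1 - A x η2 - Atil x (η1 - η2)‖
        ≤ ‖A x η1 - A x (γ t1) - Atil x (η1 - γ t1)‖
          + ‖A x (γ t1) - A x (γ t2) - Atil x (γ t1 - γ t2)‖
          + ‖A x (γ t2) - A x η2 - Atil x (γ t2 - η2)‖ := by
      rw [hsplit]
      exact norm_add₃_le
    rw [hlen1] at piece1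
    rw [hlen3] at piece3
    rw [hlenv]
    have key : δ * (t1 * ‖v‖) + (2 * c2 * (1 + k1) + 2 * M * k1) + δ * ((1 - t2) * ‖v‖)
        ≤ δ * ‖v‖ + (2 * c2 * (1 + k1) + 2 * M * k1) := by
      nlinarith [mul_nonneg (mul_nonneg hδ.le (norm_nonneg v)) (sub_nonneg.mpr ht12)]
    linarith [h3, piece1, piece2, piece3, key]
  · -- the whole segment stays outside the ball
    have hout : ∀ r ∈ Set.Icc (0:ℝ) 1, k1 ≤ ‖γ r‖ := by
      intro r hr
      by_contra hcon
      push_neg at hcon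
      exact hSne ⟨r, hr, le_of_lt hcon⟩
    have := hseg_out 0 1 le_rfl zero_le_one le_rfl hout
    rw [hγ0, hγ1] at this
    linarith
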